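/- arXiv:2508.15602 — 3 statements merged into one kernel-verified Lean document; each statement's English description precedes it below -/
import Mathlib

section
/- Let G be a 3-regular graph on 10 vertices with 15 edges, and let C = δ(X) be an edge cut with |X| = |X̄| = 5 such that both induced subgraphs G[X] and G[X̄] are 5-cycles and |C| = 5. If G contains no 4-cycle intersecting C in exactly two edges, then G is isomorphic to the Petersen graph. -/
open Classical Finset

noncomputable section

namespace PaperPM

variable {V : Type} [Fintype V] [DecidableEq V]

/-- `M` is (the edge set of) a perfect matching of `G`. -/
def IsPM (G : SimpleGraph V) (M : Finset (Sym2 V)) : Prop :=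
  (M : Set (Sym2 V)) ⊆ G.edgeSet ∧ ∀ v : V, ∃! e, e ∈ M ∧ v ∈ e

/-- `G` is matching-covered: every edge lies in a perfect matching. -/
def MatchingCovered (G : SimpleGraph V) : Prop :=
  ∀ e ∈ G.edgeSet, ∃ M, IsPM G M ∧ e ∈ M

/-- incidence (indicator) vector of a set of edges -/
def indVec (M : Finset (Sym2 V)) : Sym2 V → ℝ := fun e => if e ∈ M then 1 else 0

/-- the perfect matching polytope of `G` -/
def pmPolytope (G : SimpleGraph V) : Set (Sym2 V → ℝ) :=
  convexHull ℝ {x | ∃ M, IsPM G M ∧ x = indVec M}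

/-- the cut `δ(X)`: edges of `G` with exactly one endpoint in `X` -/
def cutE (G : SimpleGraph V) (X : Set V) : Finset (Sym2 V) :=
  Finset.univ.filter fun e =>
    e ∈ G.edgeSet ∧ ∃ u v : V, e = s(u, v) ∧ u ∈ X ∧ v ∉ X

/-- `x(A) = Σ_{a ∈ A} x_a` -/
def edgeSum (x : Sym2 V → ℝ) (A : Finset (Sym2 V)) : ℝ := ∑ e ∈ A, x e

/-- the face `P(G;C) = P(G) ∩ {x : x(δ(X)) = 1}` -/
def faceCut (G : SimpleGraph V) (X : Set V) : Set (Sym2 V → ℝ) :=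
  {x ∈ pmPolytope G | edgeSum x (cutE G X) = 1}

/-- `δ(X)` is a tight cut -/
def TightCut (G : SimpleGraph V) (X : Set V) : Prop :=
  Odd X.toFinset.card ∧ 1 < X.toFinset.card ∧ X.toFinset.card < Fintype.card V - 1 ∧
    ∀ M, IsPM G M → (M ∩ cutE G X).card = 1

/-- a brick: non-bipartite matching-covered graph without tight cuts -/
def IsBrick (G : SimpleGraph V) : Prop :=
  MatchingCovered G ∧ ¬ G.Colorable 2 ∧ ∀ X : Set V, ¬ TightCut G X

/-- dimension of a subset of `ℝ^{Sym2 V}` (affine dimension; `-1` for the empty set) -/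
def polyDim (s : Set (Sym2 V → ℝ)) : ℤ :=
  if s = ∅ then -1 else (Module.finrank ℝ (vectorSpan ℝ s) : ℤ)

/-- number of bricks in a tight cut decomposition of `G`, via the dimension
formula `dim P(G) = |E| − |V| + 1 − b(G)` of Naddef and Edmonds–Pulleyblank–Lovász. -/
def brickCount (G : SimpleGraph V) : ℤ :=
  (G.edgeFinset.card : ℤ) - Fintype.card V + 1 - polyDim (pmPolytope G)

/-- (the edge set of) a perfect matching of the contraction `G/X`, viewed inside `G`:
no edge inside `X`, exactly one cut edge (covering the contraction vertex), and every
vertex outside `X` covered exactly once. This keeps multiple parallel cut edges distinct. -/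
def IsPMContr (G : SimpleGraph V) (X : Set V) (M : Finset (Sym2 V)) : Prop :=
  (M : Set (Sym2 V)) ⊆ G.edgeSet ∧ (∀ e ∈ M, ¬ ∀ v ∈ e, v ∈ X) ∧
    (M ∩ cutE G X).card = 1 ∧ ∀ v : V, v ∉ X → ∃! e, e ∈ M ∧ v ∈ e

/-- the contraction `G/X` is matching-covered (every one of its edges, i.e. every
edge of `G` not inside `X`, lies in a perfect matching of `G/X`). -/
def MatchingCoveredContr (G : SimpleGraph V) (X : Set V) : Prop :=
  ∀ e ∈ G.edgeSet, (¬ ∀ v ∈ e, v ∈ X) → ∃ M, IsPMContr G X M ∧ e ∈ M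

/-- `δ(X)` is a separating cut: odd, nontrivial, and both cut-contractions
`G/X` and `G/X̄` are matching-covered. -/
def SeparatingCut (G : SimpleGraph V) (X : Set V) : Prop :=
  Odd X.toFinset.card ∧ 1 < X.toFinset.card ∧ X.toFinset.card < Fintype.card V - 1 ∧
    MatchingCoveredContr G X ∧ MatchingCoveredContr G Xᶜ

/-- the edges of the contraction `G/X`, as edges of `G` -/
def contrEdges (G : SimpleGraph V) (X : Set V) : Finset (Sym2 V) :=
  G.edgeFinset.filter fun e => ¬ ∀ v ∈ e, v ∈ X

/-- the perfect matching polytope of the contraction `G/X`, in the coordinates of `G` -/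
def contrPolytope (G : SimpleGraph V) (X : Set V) : Set (Sym2 V → ℝ) :=
  convexHull ℝ {x | ∃ M, IsPMContr G X M ∧ x = indVec M}

/-- number of bricks of the contraction `G/X`, via the dimension formula -/
def brickCountContr (G : SimpleGraph V) (X : Set V) : ℤ :=
  (contrEdges G X).card - ((Fintype.card V - X.toFinset.card : ℕ) + 1) + 1 -
    polyDim (contrPolytope G X)

/-- the contraction `G/X` is a Birkhoff–von Neumann graph: its perfect matching
polytope is cut out by nonnegativity, the degree equations, and `x(δ(X)) = 1`. -/
def BvNContr (G : SimpleGraph V) (X : Set V) : Prop :=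
  contrPolytope G X =
    {x | (∀ e, 0 ≤ x e) ∧ (∀ e : Sym2 V, (e ∉ G.edgeSet ∨ ∀ v ∈ e, v ∈ X) → x e = 0) ∧
      (∀ v : V, v ∉ X → edgeSum x (cutE G {v}) = 1) ∧ edgeSum x (cutE G X) = 1}

/-- the contraction `G/X` is bipartite -/
def ContrBipartite (G : SimpleGraph V) (X : Set V) : Prop :=
  ∃ (c : V → Bool) (b : Bool), ∀ u v : V, G.Adj u v → (u ∉ X ∨ v ∉ X) →
    (if u ∈ X then b else c u) ≠ (if v ∈ X then b else c v)

/-- `G` is a Birkhoff–von Neumann graph -/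
def BvN (G : SimpleGraph V) : Prop :=
  pmPolytope G =
    {x | (∀ e, 0 ≤ x e) ∧ (∀ e : Sym2 V, e ∉ G.edgeSet → x e = 0) ∧
      ∀ v : V, edgeSum x (cutE G {v}) = 1}

/-- `F` is a face of the convex set `P` -/
def IsFaceOf {E : Type*} [AddCommGroup E] [Module ℝ E] (P F : Set E) : Prop :=
  F ⊆ P ∧ Convex ℝ F ∧ ∀ x ∈ P, ∀ y ∈ P, ∀ t : ℝ, 0 < t → t < 1 →
    t • x + (1 - t) • y ∈ F → x ∈ F ∧ y ∈ F

/-- a vector is integral if all its coordinates are integers -/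
def Integral (x : Sym2 V → ℝ) : Prop := ∀ e, ∃ n : ℤ, x e = (n : ℝ)

/-- the Petersen graph, as the Kneser graph `K(5,2)` -/
def petersenGraph : SimpleGraph {s : Finset (Fin 5) // s.card = 2} where
  Adj a b := Disjoint (a : Finset (Fin 5)) (b : Finset (Fin 5))
  symm := ⟨fun _ _ h => h.symm⟩
  loopless := ⟨fun a h => by
    have h0 : (a : Finset (Fin 5)) = ∅ := by
      exact disjoint_self.mp h
    have h2 := a.2
    rw [h0] at h2
    simp at h2⟩

/-! Each vertex has two neighbours on its own side and hence exactly one across the cut, so the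
cut edges form a perfect matching and `G` is two 5-cycles joined by a bijection `σ`. A 4-cycle
meeting the cut twice is a pair of consecutive cycle vertices together with their partners, so its
absence says that `σ` maps neighbours to non-neighbours. Then `σ` steps by `±2` along the second
cycle, and labelling the vertices by 2-subsets of `Fin 5` identifies `G` with `K(5,2)`; the last
step is a finite check over all 120 permutations. -/

open SimpleGraph

section JoinBy

variable {α β : Type*}

def joinBy (H₁ : SimpleGraph α) (H₂ : SimpleGraph β) (f : α → β) : SimpleGraph (α ⊕ β) where
  Adj
    | .inl a, .inl a' => H₁.Adj a a'
    | .inr b, .inr b' => H₂.Adj b b'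
    | .inl a, .inr b => f a = b
    | .inr b, .inl a => f a = b
  symm := ⟨by rintro (a | b) (a' | b') h <;> first | exact h.symm | exact h⟩
  loopless := ⟨by
    rintro (a | b) h
    exacts [H₁.loopless.irrefl a h, H₂.loopless.irrefl b h]⟩

instance (H₁ : SimpleGraph α) (H₂ : SimpleGraph β) [DecidableRel H₁.Adj] [DecidableRel H₂.Adj]
    [DecidableEq β] (f : α → β) : DecidableRel (joinBy H₁ H₂ f).Adj
  | .inl a, .inl a' => inferInstanceAs (Decidable (H₁.Adj a a'))
  | .inr b, .inr b' => inferInstanceAs (Decidable (H₂.Adj b b'))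
  | .inl a, .inr b => inferInstanceAs (Decidable (f a = b))
  | .inr b, .inl a => inferInstanceAs (Decidable (f a = b))

end JoinBy

/-- The outer pairs `{2k, 2k+1}` and the inner pairs `{m, m+2}` each form a 5-cycle in `K(5,2)`,
and the only inner pair disjoint from `{2k, 2k+1}` is `{2k+2, 2k+4}`; the sign in `m` is chosen so
that this is the label of `σ k` when `σ` steps by `±2`. -/
def petersenLabel (σ : Fin 5 → Fin 5) : Fin 5 ⊕ Fin 5 → {s : Finset (Fin 5) // s.card = 2}
  | .inl k => ⟨{2 * k, 2 * k + 1}, card_pair (by simp)⟩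
  | .inr j =>
    let m := if σ 1 - σ 0 = 2 then j - σ 0 + 2 else σ 0 - j + 2
    ⟨{m, m + 2}, card_pair (by simp)⟩

set_option maxRecDepth 10000 in
theorem petersenLabel_injective_and_adj_iff :
    ∀ σ : Equiv.Perm (Fin 5), (∀ i, ¬ (cycleGraph 5).Adj (σ i) (σ (i + 1))) →
      Function.Injective (petersenLabel σ) ∧
        ∀ a b, (joinBy (cycleGraph 5) (cycleGraph 5) σ).Adj a b ↔
          Disjoint (petersenLabel σ a).1 (petersenLabel σ b).1 := by
  decide

def joinByCycleIsoPetersen (σ : Equiv.Perm (Fin 5))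
    (hσ : ∀ i, ¬ (cycleGraph 5).Adj (σ i) (σ (i + 1))) :
    joinBy (cycleGraph 5) (cycleGraph 5) σ ≃g petersenGraph where
  toEquiv := Equiv.ofBijective (petersenLabel σ) <|
    (Fintype.bijective_iff_injective_and_card _).2
      ⟨(petersenLabel_injective_and_adj_iff σ hσ).1, by decide⟩
  map_rel_iff' := ((petersenLabel_injective_and_adj_iff σ hσ).2 _ _).symm

section InducedSides

variable {W : Type*} {G : SimpleGraph W} {X : Set W}

def isoJoinBy {α β : Type*} {H₁ : SimpleGraph α} {H₂ : SimpleGraph β}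
    (φ : G.induce X ≃g H₁) (ψ : G.induce Xᶜ ≃g H₂) (μ : X → ↥Xᶜ)
    (hμ : ∀ (x : X) (y : ↥Xᶜ), G.Adj x y ↔ μ x = y) :
    G ≃g joinBy H₁ H₂ (ψ ∘ μ ∘ φ.symm) where
  toEquiv := (Equiv.Set.sumCompl X).symm.trans (Equiv.sumCongr φ.toEquiv ψ.toEquiv)
  map_rel_iff' := by
    intro u v
    by_cases hu : u ∈ X <;> by_cases hv : v ∈ X <;>
      simp only [Equiv.trans_apply, Equiv.Set.sumCompl_symm_apply_of_mem,
        Equiv.Set.sumCompl_symm_apply_of_notMem, hu, hv, not_false_eq_true, Equiv.sumCongr_apply,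
        Sum.map_inl, Sum.map_inr, RelIso.coe_fn_toEquiv, joinBy, Function.comp_apply,
        RelIso.symm_apply_apply, EmbeddingLike.apply_eq_iff_eq, ← hμ, G.adj_comm v u]
    exacts [φ.map_adj_iff, ψ.map_adj_iff]

theorem exists_equiv_compl_adj_iff (hX : ∀ v ∈ X, ∃! w, G.Adj v w ∧ w ∉ X)
    (hXc : ∀ v ∈ Xᶜ, ∃! w, G.Adj v w ∧ w ∉ Xᶜ) :
    ∃ μ : X ≃ ↥Xᶜ, ∀ (x : X) (y : ↥Xᶜ), G.Adj x y ↔ μ x = y := by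
  choose μ hμ hμ_unique using fun x : X => hX x x.2
  choose ν hν hν_unique using fun y : ↥Xᶜ => hXc y y.2
  refine ⟨⟨fun x => ⟨μ x, (hμ x).2⟩, fun y => ⟨ν y, not_not.1 (hν y).2⟩, fun x => ?_, fun y => ?_⟩,
    fun x y => ⟨fun h => Subtype.ext (hμ_unique x y ⟨h, y.2⟩).symm, fun h => ?_⟩⟩
  · exact Subtype.ext (hν_unique _ x ⟨(hμ x).1.symm, not_not.2 x.2⟩).symm
  · exact Subtype.ext (hμ_unique _ y ⟨(hν y).1.symm, y.2⟩).symm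
  · rw [← h]
    exact (hμ x).1

end InducedSides

section Finite

variable {G : SimpleGraph V}

theorem existsUnique_adj_notMem_of_degree_eq [DecidableRel G.Adj] {S : Set V} {v : V}
    (hv : v ∈ S) (h : G.degree v = (G.induce S).degree ⟨v, hv⟩ + 1) :
    ∃! w, G.Adj v w ∧ w ∉ S := by
  have hin : (G.induce S).degree ⟨v, hv⟩ = #(G.neighborFinset v ∩ S.toFinset) := by
    rw [← card_neighborFinset_eq_degree, ← map_neighborFinset_induce ⟨v, hv⟩, card_map]
  have hsplit := card_inter_add_card_sdiff (G.neighborFinset v) S.toFinset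
  rw [card_neighborFinset_eq_degree, h, hin, add_left_cancel_iff,
    card_eq_one_iff_existsUnique] at hsplit
  simpa using hsplit

theorem existsUnique_adj_notMem_of_induce_iso_cycleGraph [DecidableRel G.Adj] {n : ℕ}
    {S : Set V} (hreg : ∀ v, G.degree v = 3) (φ : G.induce S ≃g cycleGraph (n + 3))
    {v : V} (hv : v ∈ S) : ∃! w, G.Adj v w ∧ w ∉ S :=
  existsUnique_adj_notMem_of_degree_eq hv <| by
    rw [hreg, ← φ.degree_eq, cycleGraph_degree_three_le]

theorem mk_mem_cutE_iff {X : Set V} {u v : V} :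
    s(u, v) ∈ cutE G X ↔ G.Adj u v ∧ (u ∈ X ↔ v ∉ X) := by
  simp only [cutE, mem_filter, mem_univ, true_and, mem_edgeSet, Sym2.eq_iff]
  refine and_congr_right fun _ => ⟨?_, fun h => ?_⟩
  · rintro ⟨x, y, ⟨rfl, rfl⟩ | ⟨rfl, rfl⟩, hx, hy⟩ <;> tauto
  · by_cases hu : u ∈ X
    · exact ⟨u, v, .inl ⟨rfl, rfl⟩, hu, h.1 hu⟩
    · exact ⟨v, u, .inr ⟨rfl, rfl⟩, not_not.1 (mt h.2 hu), hu⟩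

def IsFourCycleMeetingCutTwice (G : SimpleGraph V) (X : Set V) (a b c d : V) : Prop :=
  a ≠ b ∧ a ≠ c ∧ a ≠ d ∧ b ≠ c ∧ b ≠ d ∧ c ≠ d ∧
    G.Adj a b ∧ G.Adj b c ∧ G.Adj c d ∧ G.Adj d a ∧
    (({s(a, b), s(b, c), s(c, d), s(d, a)} : Finset (Sym2 V)) ∩ cutE G X).card = 2

theorem isFourCycleMeetingCutTwice_of_mem {X : Set V} {a b c d : V} (ha : a ∈ X) (hb : b ∈ X)
    (hc : c ∉ X) (hd : d ∉ X) (hab : G.Adj a b) (hbc : G.Adj b c) (hcd : G.Adj c d)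
    (hda : G.Adj d a) : IsFourCycleMeetingCutTwice G X a b c d := by
  refine ⟨hab.ne, ne_of_mem_of_not_mem ha hc, ne_of_mem_of_not_mem ha hd,
    ne_of_mem_of_not_mem hb hc, ne_of_mem_of_not_mem hb hd, hcd.ne, hab, hbc, hcd, hda, ?_⟩
  rw [insert_inter_of_notMem (by simp [mk_mem_cutE_iff, ha, hb]),
    insert_inter_of_mem (mk_mem_cutE_iff.2 ⟨hbc, by simp [hb, hc]⟩),
    insert_inter_of_notMem (by simp [mk_mem_cutE_iff, hc, hd]),
    singleton_inter_of_mem (mk_mem_cutE_iff.2 ⟨hda, by simp [ha, hd]⟩)]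
  exact card_pair (by simp [hab.ne', ne_of_mem_of_not_mem hb hd])

end Finite

theorem stmt2_general (G : SimpleGraph V) [DecidableRel G.Adj]
    (hreg : ∀ v : V, G.degree v = 3) (X : Set V)
    (hC5X : Nonempty (G.induce X ≃g SimpleGraph.cycleGraph 5))
    (hC5Xc : Nonempty (G.induce Xᶜ ≃g SimpleGraph.cycleGraph 5))
    (h4 : ¬ ∃ a b c d : V, a ≠ b ∧ a ≠ c ∧ a ≠ d ∧ b ≠ c ∧ b ≠ d ∧ c ≠ d ∧
      G.Adj a b ∧ G.Adj b c ∧ G.Adj c d ∧ G.Adj d a ∧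
      (({s(a, b), s(b, c), s(c, d), s(d, a)} : Finset (Sym2 V)) ∩ cutE G X).card = 2) :
    Nonempty (G ≃g petersenGraph) := by
  obtain ⟨φ⟩ := hC5X
  obtain ⟨ψ⟩ := hC5Xc
  obtain ⟨μ, hμ⟩ := exists_equiv_compl_adj_iff
    (fun _ hv => existsUnique_adj_notMem_of_induce_iso_cycleGraph hreg φ hv)
    (fun _ hv => existsUnique_adj_notMem_of_induce_iso_cycleGraph hreg ψ hv)
  let σ : Equiv.Perm (Fin 5) := φ.toEquiv.symm.trans (μ.trans ψ.toEquiv)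
  have hσ : ∀ i, ¬ (cycleGraph 5).Adj (σ i) (σ (i + 1)) := by
    intro i hi
    set a := φ.symm i
    set b := φ.symm (i + 1)
    refine h4 ⟨a, b, μ b, μ a, isFourCycleMeetingCutTwice_of_mem a.2 b.2 (μ b).2 (μ a).2
      ?_ ((hμ b _).2 rfl) (ψ.map_adj_iff.1 hi.symm) ((hμ a _).2 rfl).symm⟩
    exact φ.symm.map_adj_iff.2 (cycleGraph_adj.2 (Or.inr (add_sub_cancel_left i 1)))
  exact ⟨(isoJoinBy φ ψ μ hμ).trans (joinByCycleIsoPetersen σ hσ)⟩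

/-- a 3-regular graph on 10 vertices with 15 edges, having a cut
`C = δ(X)` with `|X| = |X̄| = 5`, both sides inducing 5-cycles, `|C| = 5`, and no
4-cycle meeting `C` in exactly two edges, is the Petersen graph. -/
theorem stmt2 (G : SimpleGraph V) [DecidableRel G.Adj]
    (hcard : Fintype.card V = 10) (hreg : ∀ v : V, G.degree v = 3)
    (hedges : G.edgeFinset.card = 15) (X : Set V)
    (hX : X.toFinset.card = 5) (hXc : Xᶜ.toFinset.card = 5)
    (hC5X : Nonempty (G.induce X ≃g SimpleGraph.cycleGraph 5))
    (hC5Xc : Nonempty (G.induce Xᶜ ≃g SimpleGraph.cycleGraph 5))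
    (hcut : (cutE G X).card = 5)
    (h4 : ¬ ∃ a b c d : V, a ≠ b ∧ a ≠ c ∧ a ≠ d ∧ b ≠ c ∧ b ≠ d ∧ c ≠ d ∧
      G.Adj a b ∧ G.Adj b c ∧ G.Adj c d ∧ G.Adj d a ∧
      (({s(a, b), s(b, c), s(c, d), s(d, a)} : Finset (Sym2 V)) ∩ cutE G X).card = 2) :
    Nonempty (G ≃g petersenGraph) :=
  stmt2_general G hreg X hC5X hC5Xc h4

end PaperPM
end
end

section
/- Let G be a matching-covered graph and C a separating cut with cut-contractions G₁, G₂. If both G₁ and G₂ are Birkhoff–von Neumann graphs, then every facet of the polytope P(G;C) = P(G) ∩ {x : x(C) = 1} is exposed by a non-negativity inequality x_e ≥ 0; indeed P(G;C) is described by non-negativity inequalities, the degree equations x(δ(v)) = 1, and x(C) = 1. -/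
open Classical Finset

noncomputable section

/-!
Restricting `x` to the edges of `G/X̄` and of `G/X` gives points satisfying the degree equations of
the two contractions, so by the Birkhoff–von Neumann hypothesis each is a convex combination of
perfect matchings of its contraction. Every such matching uses exactly one edge of `C`, and in
both combinations the matchings through a cut edge `f` carry total weight `x f`. Gluing the two
distributions along `f` (weight `p M * q N / x f` on the pair `(M, N)`) writes `x` as a convex
combination of the perfect matchings `M ∪ N` of `G`.

So `P(G;C)` is the nonnegative part of an affine subspace. For a facet `F` of such a polytope,
take `z` in the relative interior of `F`: some coordinate `x e` vanishes at `z` but not on all of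
`P(G;C)`, otherwise `z` could be pushed past every point of `P(G;C)` and `F` would be everything.
The face `{x e = 0}` then contains `F` and is proper, so by dimension it equals `F`.
-/

section Faces

open Set Module Filter Topology

variable {E : Type*} [AddCommGroup E] [Module ℝ E]

theorem PaperPM.IsFaceOf.isExtreme {P F : Set E} (hF : IsFaceOf P F) : IsExtreme ℝ P F := by
  refine ⟨hF.1, fun x hx y hy z hzF hz => ?_⟩
  obtain ⟨a, b, ha, hb, hab, rfl⟩ := hz
  obtain rfl : b = 1 - a := by linarith
  exact (hF.2.2 x hx y hy a ha (by linarith) hzF).1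

theorem mem_openSegment_lineMap_neg {z y : E} {s : ℝ} (hs : 0 < s) :
    z ∈ openSegment ℝ (AffineMap.lineMap z y (-s)) y := by
  rw [openSegment_eq_image_lineMap]
  refine ⟨s / (1 + s), ⟨by positivity, by rw [div_lt_one (by positivity)]; linarith⟩, ?_⟩
  simp only [AffineMap.lineMap_apply_module]
  match_scalars <;> field_simp <;> ring

theorem subset_affineSpan_of_finrank_le [FiniteDimensional ℝ E] {F F' : Set E} (hFF' : F ⊆ F')
    (hne : F.Nonempty) (h : finrank ℝ (vectorSpan ℝ F') ≤ finrank ℝ (vectorSpan ℝ F)) :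
    F' ⊆ affineSpan ℝ F := by
  have hspan : affineSpan ℝ F = affineSpan ℝ F' := by
    refine AffineSubspace.eq_of_direction_eq_of_nonempty_of_le ?_
      (hne.mono (subset_affineSpan ℝ F)) (affineSpan_mono ℝ hFF')
    simp only [direction_affineSpan]
    exact Submodule.eq_of_le_of_finrank_le (vectorSpan_mono ℝ hFF') h
  exact hspan ▸ subset_affineSpan ℝ F'

theorem exists_mem_openSegment_of_mem_intrinsicInterior [TopologicalSpace E]
    [IsTopologicalAddGroup E] [ContinuousSMul ℝ E] {F : Set E} {z : E}
    (hz : z ∈ intrinsicInterior ℝ F) {y : E} (hy : y ∈ affineSpan ℝ F) :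
    ∃ u ∈ F, z ∈ openSegment ℝ u y := by
  obtain ⟨z, hz, rfl⟩ := hz
  let γ : ℝ → affineSpan ℝ F := fun s => ⟨AffineMap.lineMap (z : E) y (-s),
    AffineMap.lineMap_mem _ z.2 hy⟩
  have hγ : Continuous γ := (AffineMap.lineMap_continuous.comp continuous_neg).subtype_mk _
  have hγ0 : γ 0 = z := by ext; simp [γ]
  have hev : ∀ᶠ s in 𝓝[>] (0 : ℝ), γ s ∈ interior ((↑) ⁻¹' F) :=
    nhdsWithin_le_nhds (hγ.tendsto' 0 z hγ0 |>.eventually_mem (isOpen_interior.mem_nhds hz))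
  obtain ⟨s, hs, hs0⟩ := (hev.and self_mem_nhdsWithin).exists
  exact ⟨γ s, (interior_subset hs : γ s ∈ (↑) ⁻¹' F), mem_openSegment_lineMap_neg hs0⟩

end Faces

section RelativeInterior

variable {E : Type*} [NormedAddCommGroup E] [NormedSpace ℝ E] [FiniteDimensional ℝ E]

theorem IsExtreme.subset_of_subset_affineSpan {P F C : Set E} (hPF : IsExtreme ℝ P F)
    (hF : Convex ℝ F) (hne : F.Nonempty) (hCP : C ⊆ P) (hC : C ⊆ affineSpan ℝ F) :
    C ⊆ F := by
  obtain ⟨z, hz⟩ := hne.intrinsicInterior hF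
  intro y hy
  obtain ⟨u, hu, hzu⟩ := exists_mem_openSegment_of_mem_intrinsicInterior hz (hC hy)
  exact hPF.right_mem_of_mem_openSegment (hPF.subset hu) (hCP hy) (intrinsicInterior_subset hz) hzu

end RelativeInterior

section Coordinates

open Set Module Filter Topology

variable {ι : Type*}

theorem isExtreme_setOf_apply_eq_zero {Q : Set (ι → ℝ)} (hQ : Q ⊆ Ici 0) (i : ι) :
    IsExtreme ℝ Q {x ∈ Q | x i = 0} := by
  refine ⟨fun x hx => hx.1, fun x hx y hy z hz hzxy => ⟨hx, ?_⟩⟩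
  obtain ⟨a, b, ha, hb, -, rfl⟩ := hzxy
  have hsum : a * x i + b * y i = 0 := by simpa using hz.2
  have hx0 : 0 ≤ x i := hQ hx i
  have hy0 : 0 ≤ y i := hQ hy i
  have hax : a * x i = 0 := by nlinarith [mul_nonneg ha.le hx0, mul_nonneg hb.le hy0]
  exact (mul_eq_zero.1 hax).resolve_left ha.ne'

theorem Convex.setOf_apply_eq_zero {Q : Set (ι → ℝ)} (hQ : Convex ℝ Q) (i : ι) :
    Convex ℝ {x ∈ Q | x i = 0} :=
  hQ.inter (convex_hyperplane (LinearMap.proj i : (ι → ℝ) →ₗ[ℝ] ℝ).isLinear 0)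

variable [Fintype ι] {S : AffineSubspace ℝ (ι → ℝ)}

theorem exists_mem_openSegment_of_apply_eq_zero_imp {z w : ι → ℝ}
    (hz : z ∈ (S : Set (ι → ℝ)) ∩ Ici 0) (hw : w ∈ (S : Set (ι → ℝ)) ∩ Ici 0)
    (hzw : ∀ i, z i = 0 → w i = 0) :
    ∃ u ∈ (S : Set (ι → ℝ)) ∩ Ici 0, z ∈ openSegment ℝ u w := by
  have hev : ∀ᶠ s in 𝓝 (0 : ℝ), ∀ i, 0 ≤ AffineMap.lineMap z w (-s) i := by
    refine eventually_all.2 fun i => ?_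
    rcases (hz.2 i).eq_or_lt with hzi | hzi
    · refine Eventually.of_forall fun s => ?_
      simp [AffineMap.lineMap_apply_module, ← hzi, hzw i hzi.symm]
    · have hcont : Continuous fun s : ℝ => AffineMap.lineMap z w (-s) i :=
        (continuous_apply i).comp (AffineMap.lineMap_continuous.comp continuous_neg)
      filter_upwards [hcont.tendsto' 0 (z i) (by simp) |>.eventually (lt_mem_nhds hzi)]
        with s hs using hs.le
  have hev' : ∀ᶠ s in 𝓝[>] (0 : ℝ), ∀ i, 0 ≤ AffineMap.lineMap z w (-s) i :=
    nhdsWithin_le_nhds hev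
  obtain ⟨s, hs, hs0⟩ := (hev'.and self_mem_nhdsWithin).exists
  exact ⟨_, ⟨AffineMap.lineMap_mem _ hz.1 hw.1, hs⟩, mem_openSegment_lineMap_neg hs0⟩

theorem exists_eq_setOf_apply_eq_zero_of_isFaceOf {F : Set (ι → ℝ)}
    (hF : PaperPM.IsFaceOf ((S : Set (ι → ℝ)) ∩ Ici 0) F) (hne : F.Nonempty)
    (hdim : finrank ℝ (vectorSpan ℝ F) + 1 =
      finrank ℝ (vectorSpan ℝ ((S : Set (ι → ℝ)) ∩ Ici 0))) :
    ∃ i, (∃ w ∈ (S : Set (ι → ℝ)) ∩ Ici 0, w i ≠ 0) ∧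
      F = {x ∈ (S : Set (ι → ℝ)) ∩ Ici 0 | x i = 0} := by
  set Q := (S : Set (ι → ℝ)) ∩ Ici 0
  have hQ : Convex ℝ Q := S.convex.inter (convex_Ici 0)
  obtain ⟨z, hz⟩ := hne.intrinsicInterior hF.2.1
  have hzF := intrinsicInterior_subset hz
  obtain ⟨i, hzi, w, hwQ, hwi⟩ : ∃ i, z i = 0 ∧ ∃ w ∈ Q, w i ≠ 0 := by
    by_contra! h
    have hQF : Q ⊆ F := fun w hw => by
      obtain ⟨u, hu, hzu⟩ := exists_mem_openSegment_of_apply_eq_zero_imp (hF.1 hzF) hw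
        fun i hzi => h i hzi w hw
      exact hF.isExtreme.right_mem_of_mem_openSegment hu hw hzF hzu
    rw [hQF.antisymm hF.1] at hdim
    omega
  set Fi := {x ∈ Q | x i = 0}
  have hFi := isExtreme_setOf_apply_eq_zero inter_subset_right i (Q := Q)
  have hFFi : F ⊆ Fi := fun y hy => by
    obtain ⟨u, hu, hzu⟩ := exists_mem_openSegment_of_mem_intrinsicInterior hz
      (subset_affineSpan ℝ F hy)
    exact hFi.right_mem_of_mem_openSegment (hF.1 hu) (hF.1 hy) ⟨hF.1 hzF, hzi⟩ hzu
  have hlt : finrank ℝ (vectorSpan ℝ Fi) < finrank ℝ (vectorSpan ℝ Q) := by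
    by_contra! hle
    have hQFi := hFi.subset_of_subset_affineSpan (hQ.setOf_apply_eq_zero i) ⟨z, hF.1 hzF, hzi⟩
      subset_rfl (subset_affineSpan_of_finrank_le hFi.subset ⟨z, hF.1 hzF, hzi⟩ hle)
    exact hwi (hQFi hwQ).2
  have hFiF : Fi ⊆ F := by
    refine hF.isExtreme.subset_of_subset_affineSpan hF.2.1 hne hFi.subset
      (subset_affineSpan_of_finrank_le hFFi hne ?_)
    have := Submodule.finrank_mono (vectorSpan_mono ℝ hFFi)
    omega
  exact ⟨i, ⟨w, hwQ, hwi⟩, hFFi.antisymm hFiF⟩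

end Coordinates

section Gluing

open Finset

variable {α β γ : Type*} [Fintype α] [DecidableEq γ]

/-- Given distributions `p` and `q` whose labels `f` and `g` have the same distribution, the
coupling that pairs `a` with `b` only when their labels agree, and then independently. -/
def gluedWeight (p : α → ℝ) (q : β → ℝ) (f : α → γ) (g : β → γ) (ab : α × β) : ℝ :=
  if f ab.1 = g ab.2 then p ab.1 * q ab.2 / ∑ a with f a = f ab.1, p a else 0

variable {p : α → ℝ} {q : β → ℝ} {f : α → γ} {g : β → γ}

theorem gluedWeight_nonneg (hp : ∀ a, 0 ≤ p a) (hq : ∀ b, 0 ≤ q b) (ab : α × β) :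
    0 ≤ gluedWeight p q f g ab := by
  unfold gluedWeight
  split_ifs
  · exact div_nonneg (mul_nonneg (hp _) (hq _)) (sum_nonneg fun a _ => hp a)
  · rfl

theorem eq_of_gluedWeight_ne_zero {ab : α × β} (h : gluedWeight p q f g ab ≠ 0) :
    f ab.1 = g ab.2 := by
  by_contra hne
  exact h (if_neg hne)

variable [Fintype β]

theorem sum_gluedWeight_mk_left (hp : ∀ a, 0 ≤ p a)
    (hpq : ∀ c, ∑ a with f a = c, p a = ∑ b with g b = c, q b) (a : α) :
    ∑ b, gluedWeight p q f g (a, b) = p a := by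
  have hpa : p a ≤ ∑ a' with f a' = f a, p a' :=
    single_le_sum (fun a' _ => hp a') (mem_filter.2 ⟨mem_univ a, rfl⟩)
  simp only [gluedWeight, ← sum_filter, ← sum_div, ← mul_sum]
  rw [filter_congr fun b _ => eq_comm, ← hpq]
  rcases (hp a).eq_or_lt with ha | ha
  · simp [← ha]
  · rw [mul_div_assoc, div_self (by linarith), mul_one]

theorem sum_gluedWeight_mk_right (hq : ∀ b, 0 ≤ q b)
    (hpq : ∀ c, ∑ a with f a = c, p a = ∑ b with g b = c, q b) (b : β) :
    ∑ a, gluedWeight p q f g (a, b) = q b := by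
  have hqb : q b ≤ ∑ b' with g b' = g b, q b' :=
    single_le_sum (fun b' _ => hq b') (mem_filter.2 ⟨mem_univ b, rfl⟩)
  simp only [gluedWeight, ← sum_filter]
  rw [sum_congr rfl fun a ha => by rw [(mem_filter.1 ha).2], ← sum_div, ← sum_mul, hpq]
  rcases (hq b).eq_or_lt with hb | hb
  · simp [← hb]
  · rw [mul_comm, mul_div_assoc, div_self (by linarith), mul_one]

variable {E : Type*} [AddCommGroup E] [Module ℝ E]

theorem sum_gluedWeight_smul_fst (hp : ∀ a, 0 ≤ p a)
    (hpq : ∀ c, ∑ a with f a = c, p a = ∑ b with g b = c, q b) (φ : α → E) :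
    ∑ ab, gluedWeight p q f g ab • φ ab.1 = ∑ a, p a • φ a := by
  simp only [Fintype.sum_prod_type, ← sum_smul, sum_gluedWeight_mk_left hp hpq]

theorem sum_gluedWeight_smul_snd (hq : ∀ b, 0 ≤ q b)
    (hpq : ∀ c, ∑ a with f a = c, p a = ∑ b with g b = c, q b) (ψ : β → E) :
    ∑ ab, gluedWeight p q f g ab • ψ ab.2 = ∑ b, q b • ψ b := by
  simp only [Fintype.sum_prod_type_right, ← sum_smul, sum_gluedWeight_mk_right hq hpq]

end Gluing

theorem Finset.existsUnique_mem_union {α : Type*} [DecidableEq α] {M N : Finset α}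
    {P : α → Prop} (hN : ∃! e, e ∈ N ∧ P e) (hMN : ∀ e ∈ M, P e → e ∈ N) :
    ∃! e, e ∈ M ∪ N ∧ P e := by
  obtain ⟨e₀, he₀, huniq⟩ := hN
  refine ⟨e₀, ⟨mem_union_right _ he₀.1, he₀.2⟩, fun e ⟨he, hPe⟩ => huniq e ⟨?_, hPe⟩⟩
  exact (mem_union.1 he).elim (fun he => hMN e he hPe) id

namespace PaperPM

open Finset

section EdgeVectors

open Set Module

variable {V : Type}

theorem polyDim_of_nonempty {s : Set (Sym2 V → ℝ)} (hs : s.Nonempty) :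
    polyDim s = finrank ℝ (vectorSpan ℝ s) :=
  if_neg hs.ne_empty

theorem exists_eq_setOf_apply_eq_zero_of_polyDim [Fintype V]
    {S : AffineSubspace ℝ (Sym2 V → ℝ)} (hS : (0 : Sym2 V → ℝ) ∉ S) {F : Set (Sym2 V → ℝ)}
    (hF : IsFaceOf ((S : Set (Sym2 V → ℝ)) ∩ Ici 0) F)
    (hdim : polyDim F = polyDim ((S : Set (Sym2 V → ℝ)) ∩ Ici 0) - 1) :
    ∃ e, (∃ w ∈ (S : Set (Sym2 V → ℝ)) ∩ Ici 0, w e ≠ 0) ∧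
      F = {x ∈ (S : Set (Sym2 V → ℝ)) ∩ Ici 0 | x e = 0} := by
  rcases F.eq_empty_or_nonempty with rfl | hne
  · obtain ⟨p, hp⟩ : ((S : Set (Sym2 V → ℝ)) ∩ Ici 0).Nonempty := by
      by_contra! hQ
      simp [polyDim, hQ] at hdim
    have hQp : (S : Set (Sym2 V → ℝ)) ∩ Ici 0 = {p} := by
      rw [polyDim_of_nonempty ⟨p, hp⟩] at hdim
      simp only [polyDim, if_true] at hdim
      have h0 : finrank ℝ (vectorSpan ℝ ((S : Set (Sym2 V → ℝ)) ∩ Ici 0)) = 0 := by omega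
      rw [Submodule.finrank_eq_zero, vectorSpan_eq_bot_iff_subsingleton] at h0
      exact h0.eq_singleton_of_mem hp
    obtain ⟨e, he⟩ := Function.ne_iff.1 (ne_of_mem_of_not_mem hp.1 hS)
    refine ⟨e, ⟨p, hp, he⟩, ?_⟩
    rw [hQp, eq_comm, Set.eq_empty_iff_forall_notMem]
    rintro x ⟨rfl, hx⟩
    exact he hx
  · rw [polyDim_of_nonempty hne, polyDim_of_nonempty (hne.mono hF.1)] at hdim
    exact exists_eq_setOf_apply_eq_zero_of_isFaceOf hF hne (by omega)

theorem edgeSum_add (x y : Sym2 V → ℝ) (A : Finset (Sym2 V)) :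
    edgeSum (x + y) A = edgeSum x A + edgeSum y A :=
  sum_add_distrib

theorem edgeSum_sub (x y : Sym2 V → ℝ) (A : Finset (Sym2 V)) :
    edgeSum (x - y) A = edgeSum x A - edgeSum y A :=
  sum_sub_distrib _ _

theorem edgeSum_smul (c : ℝ) (x : Sym2 V → ℝ) (A : Finset (Sym2 V)) :
    edgeSum (c • x) A = c * edgeSum x A := by
  simp [edgeSum, mul_sum]

end EdgeVectors

section IncidenceVectors

variable {V : Type} [DecidableEq V]

theorem indVec_union (M N : Finset (Sym2 V)) :
    indVec (M ∪ N) = indVec M + indVec N - indVec (M ∩ N) := by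
  funext e
  by_cases hM : e ∈ M <;> by_cases hN : e ∈ N <;> simp [indVec, hM, hN]

theorem edgeSum_indVec (M A : Finset (Sym2 V)) : edgeSum (indVec M) A = #(A ∩ M) := by
  simp only [edgeSum, indVec, sum_boole, filter_mem_eq_inter]

variable {ι : Type*} [Fintype ι]

theorem sum_smul_indVec_apply (p : ι → ℝ) (M : ι → Finset (Sym2 V)) (e : Sym2 V) :
    (∑ a, p a • indVec (M a)) e = ∑ a with e ∈ M a, p a := by
  simp [Finset.sum_apply, indVec, sum_filter]

theorem sum_smul_indVec_singleton_apply (p : ι → ℝ) (f : ι → Sym2 V) (e : Sym2 V) :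
    (∑ a, p a • indVec {f a}) e = ∑ a with f a = e, p a := by
  rw [sum_smul_indVec_apply]
  simp_rw [mem_singleton, eq_comm]

theorem sum_filter_eq_of_inter_eq_singleton {p : ι → ℝ} {M : ι → Finset (Sym2 V)}
    {C : Finset (Sym2 V)} {f : ι → Sym2 V} (hf : ∀ a, M a ∩ C = {f a}) (c : Sym2 V) :
    ∑ a with f a = c, p a = if c ∈ C then (∑ a, p a • indVec (M a)) c else 0 := by
  split_ifs with hc
  · rw [sum_smul_indVec_apply]
    refine sum_congr (filter_congr fun a _ => ?_) fun _ _ => rfl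
    rw [eq_comm, ← mem_singleton, ← hf a, mem_inter, and_iff_left hc]
  · refine sum_eq_zero fun a ha => absurd ?_ hc
    rw [← (mem_filter.1 ha).2]
    exact (mem_inter.1 (hf a ▸ mem_singleton_self (f a))).2

end IncidenceVectors

section Cuts

variable {V : Type} [Fintype V] [DecidableEq V] {G : SimpleGraph V} {X : Set V}
  {M N : Finset (Sym2 V)} {e f : Sym2 V}

theorem mem_cutE :
    e ∈ cutE G X ↔ e ∈ G.edgeSet ∧ ∃ u v : V, e = s(u, v) ∧ u ∈ X ∧ v ∉ X := by
  simp [cutE]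

theorem cutE_compl : cutE G Xᶜ = cutE G X := by
  ext e
  simp only [mem_cutE, Set.mem_compl_iff, not_not]
  constructor <;>
  · rintro ⟨he, u, v, rfl, hu, hv⟩
    exact ⟨he, v, u, Sym2.eq_swap, hv, hu⟩

theorem mem_cutE_of_mem {u v : V} (he : e ∈ G.edgeSet) (hu : u ∈ e) (huX : u ∈ X)
    (hv : v ∈ e) (hvX : v ∉ X) : e ∈ cutE G X :=
  mem_cutE.2 ⟨he, u, v, (Sym2.mem_and_mem_iff (ne_of_mem_of_not_mem huX hvX)).1 ⟨hu, hv⟩,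
    huX, hvX⟩

theorem mem_cutE_singleton {v : V} : e ∈ cutE G {v} ↔ e ∈ G.edgeSet ∧ v ∈ e := by
  refine ⟨fun h => ?_, fun ⟨he, hv⟩ => ?_⟩
  · obtain ⟨he, u, w, rfl, rfl, -⟩ := mem_cutE.1 h
    exact ⟨he, Sym2.mem_mk_left _ _⟩
  · obtain ⟨w, rfl⟩ := Sym2.mem_iff_exists.1 hv
    exact mem_cutE_of_mem he hv rfl (Sym2.mem_mk_right v w) (G.ne_of_adj he).symm

theorem not_forall_mem_of_mem_cutE (he : e ∈ cutE G X) : ¬ ∀ v ∈ e, v ∈ X := by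
  obtain ⟨-, u, v, rfl, -, hv⟩ := mem_cutE.1 he
  exact fun h => hv (h v (Sym2.mem_mk_right u v))

theorem IsPMContr.mem_cutE {v : V} (hM : IsPMContr G X M) (he : e ∈ M) (hv : v ∈ e)
    (hvX : v ∈ X) : e ∈ cutE G X := by
  obtain ⟨u, hu, huX⟩ := not_forall₂.1 (hM.2.1 e he)
  exact mem_cutE_of_mem (hM.1 he) hv hvX hu huX

theorem IsPMContr.isPM_union (hM : IsPMContr G X M) (hN : IsPMContr G Xᶜ N)
    (hMN : M ∩ cutE G X = N ∩ cutE G X) : IsPM G (M ∪ N) := by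
  refine ⟨by rw [coe_union]; exact Set.union_subset hM.1 hN.1, fun v => ?_⟩
  by_cases hv : v ∈ X
  · refine Finset.existsUnique_mem_union (hN.2.2.2 v (by simpa)) fun e he hve => ?_
    exact (mem_inter.1 (hMN ▸ mem_inter.2 ⟨he, hM.mem_cutE he hve hv⟩)).1
  · rw [union_comm]
    refine Finset.existsUnique_mem_union (hM.2.2.2 v hv) fun e he hve => ?_
    have heC : e ∈ cutE G Xᶜ := hN.mem_cutE he hve hv
    rw [cutE_compl] at heC
    exact (mem_inter.1 (hMN.symm ▸ mem_inter.2 ⟨he, heC⟩)).1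

theorem IsPMContr.indVec_union (hM : IsPMContr G X M) (hN : IsPMContr G Xᶜ N)
    (hMf : M ∩ cutE G X = {f}) (hNf : N ∩ cutE G X = {f}) :
    indVec (M ∪ N) = indVec M + indVec N - indVec {f} := by
  suffices M ∩ N = {f} by rw [PaperPM.indVec_union, this]
  rw [← hMf]
  ext e
  refine ⟨fun he => ?_, fun he => ?_⟩
  · obtain ⟨heM, heN⟩ := mem_inter.1 he
    obtain ⟨v, hv, hvX⟩ := not_forall₂.1 (hN.2.1 e heN)
    exact mem_inter.2 ⟨heM, hM.mem_cutE heM hv (not_not.1 hvX)⟩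
  · exact mem_inter.2 ⟨(mem_inter.1 he).1, (mem_inter.1 ((hMf.trans hNf.symm) ▸ he)).1⟩

end Cuts

section Polytopes

variable {V : Type} [Fintype V] [DecidableEq V] {G : SimpleGraph V} {X : Set V}
  {x : Sym2 V → ℝ}

def fracSubspace (G : SimpleGraph V) (X : Set V) : AffineSubspace ℝ (Sym2 V → ℝ) where
  carrier := {x | (∀ e ∉ G.edgeSet, x e = 0) ∧ (∀ v, edgeSum x (cutE G {v}) = 1) ∧
    edgeSum x (cutE G X) = 1}
  smul_vsub_vadd_mem' c p₁ p₂ p₃ h₁ h₂ h₃ := by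
    simp only [vsub_eq_sub, vadd_eq_add, Set.mem_ofPred_eq, Pi.add_apply, Pi.smul_apply,
      Pi.sub_apply, smul_eq_mul, edgeSum_add, edgeSum_smul, edgeSum_sub] at h₁ h₂ h₃ ⊢
    refine ⟨fun e he => ?_, fun v => ?_, ?_⟩
    · simp [h₁.1 e he, h₂.1 e he, h₃.1 e he]
    · simp [h₁.2.1 v, h₂.2.1 v, h₃.2.1 v]
    · simp [h₁.2.2, h₂.2.2, h₃.2.2]

theorem mem_fracSubspace : x ∈ fracSubspace G X ↔ (∀ e ∉ G.edgeSet, x e = 0) ∧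
    (∀ v, edgeSum x (cutE G {v}) = 1) ∧ edgeSum x (cutE G X) = 1 :=
  Iff.rfl

theorem fracSubspace_compl : fracSubspace G Xᶜ = fracSubspace G X := by
  ext x
  simp only [mem_fracSubspace, cutE_compl]

theorem zero_notMem_fracSubspace : (0 : Sym2 V → ℝ) ∉ fracSubspace G X := fun h => by
  simp [mem_fracSubspace, edgeSum] at h

theorem IsPM.edgeSum_cutE_singleton {M : Finset (Sym2 V)} (hM : IsPM G M) (v : V) :
    edgeSum (indVec M) (cutE G {v}) = 1 := by
  obtain ⟨e₀, he₀, huniq⟩ := hM.2 v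
  have hδM : cutE G {v} ∩ M = {e₀} := by
    ext e
    simp only [mem_inter, mem_singleton, mem_cutE_singleton]
    refine ⟨fun ⟨⟨_, hv⟩, he⟩ => huniq e ⟨he, hv⟩, ?_⟩
    rintro rfl
    exact ⟨⟨hM.1 he₀.1, he₀.2⟩, he₀.1⟩
  rw [edgeSum_indVec, hδM, card_singleton, Nat.cast_one]

theorem pmPolytope_subset : pmPolytope G ⊆
    {x | (∀ e, 0 ≤ x e) ∧ (∀ e ∉ G.edgeSet, x e = 0) ∧ ∀ v, edgeSum x (cutE G {v}) = 1} := by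
  refine convexHull_min ?_ ?_
  · rintro _ ⟨M, hM, rfl⟩
    refine ⟨fun e => ?_, fun e he => ?_, hM.edgeSum_cutE_singleton⟩
    · unfold indVec
      split_ifs <;> norm_num
    · simp [indVec, show e ∉ M from fun h => he (hM.1 h)]
  · rintro x ⟨hx0, hxs, hxd⟩ y ⟨hy0, hys, hyd⟩ a b ha hb hab
    refine ⟨fun e => ?_, fun e he => ?_, fun v => ?_⟩
    · exact add_nonneg (mul_nonneg ha (hx0 e)) (mul_nonneg hb (hy0 e))
    · simp [hxs e he, hys e he]
    · rw [edgeSum_add, edgeSum_smul, edgeSum_smul, hxd, hyd, mul_one, mul_one, hab]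

theorem faceCut_subset :
    faceCut G X ⊆ (fracSubspace G X : Set (Sym2 V → ℝ)) ∩ Set.Ici 0 := by
  rintro x ⟨hx, hcut⟩
  obtain ⟨h0, hs, hd⟩ := pmPolytope_subset hx
  exact ⟨⟨hs, hd, hcut⟩, h0⟩

theorem indicator_mem_contrPolytope (hBvN : BvNContr G X)
    (hx : x ∈ (fracSubspace G X : Set (Sym2 V → ℝ)) ∩ Set.Ici 0) :
    {e | ¬ ∀ v ∈ e, v ∈ X}.indicator x ∈ contrPolytope G X := by
  obtain ⟨⟨hs, hd, hcut⟩, h0⟩ := hx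
  rw [hBvN]
  refine ⟨Set.indicator_nonneg fun e _ => h0 e, fun e he => ?_, fun v hv => ?_, ?_⟩
  · rcases he with he | he
    · unfold Set.indicator
      split_ifs
      exacts [hs e he, rfl]
    · exact Set.indicator_of_notMem (not_not.2 he) x
  · rw [← hd v]
    refine sum_congr rfl fun e he => Set.indicator_of_mem ?_ x
    exact fun h => hv (h v (mem_cutE_singleton.1 he).2)
  · rw [← hcut]
    exact sum_congr rfl fun e he => Set.indicator_of_mem (not_forall_mem_of_mem_cutE he) x

theorem exists_sum_eq_of_mem_contrPolytope {y : Sym2 V → ℝ} (hy : y ∈ contrPolytope G X) :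
    ∃ (ι : Type) (_ : Fintype ι) (p : ι → ℝ) (M : ι → Finset (Sym2 V)) (f : ι → Sym2 V),
      (∀ a, 0 ≤ p a) ∧ ∑ a, p a = 1 ∧ (∀ a, IsPMContr G X (M a)) ∧
      (∀ a, M a ∩ cutE G X = {f a}) ∧ ∑ a, p a • indVec (M a) = y := by
  obtain ⟨ι, _, p, z, hp0, hp1, hz, rfl⟩ := mem_convexHull_iff_exists_fintype.1 hy
  choose M hM hzM using hz
  choose f hf using fun a => card_eq_one.1 (hM a).2.2.1
  exact ⟨ι, _, p, M, f, hp0, hp1, hM, hf, by simp only [hzM]⟩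

theorem indicator_add_indicator_sub_eq (hs : ∀ e ∉ G.edgeSet, x e = 0) (e : Sym2 V) :
    {e | ¬ ∀ v ∈ e, v ∈ X}.indicator x e + {e | ¬ ∀ v ∈ e, v ∈ Xᶜ}.indicator x e -
      (if e ∈ cutE G X then {e | ¬ ∀ v ∈ e, v ∈ X}.indicator x e else 0) = x e := by
  simp only [Set.indicator_apply, Set.mem_ofPred_eq]
  by_cases hC : e ∈ cutE G X
  · have hXc : e ∈ cutE G Xᶜ := by rwa [cutE_compl]
    rw [if_pos hC, if_pos (not_forall_mem_of_mem_cutE hC),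
      if_pos (not_forall_mem_of_mem_cutE hXc)]
    ring
  by_cases hX : ∀ v ∈ e, v ∈ X
  · have hXc : ¬ ∀ v ∈ e, v ∈ Xᶜ := fun h =>
      h _ (Sym2.out_fst_mem e) (hX _ (Sym2.out_fst_mem e))
    rw [if_neg hC, if_neg (not_not.2 hX), if_pos hXc]
    ring
  by_cases hXc : ∀ v ∈ e, v ∈ Xᶜ
  · rw [if_neg hC, if_pos hX, if_neg (not_not.2 hXc)]
    ring
  obtain ⟨u, hu, huX⟩ := not_forall₂.1 hX
  obtain ⟨w, hw, hwX⟩ := not_forall₂.1 hXc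
  have hxe : x e = 0 := hs e fun he => hC (mem_cutE_of_mem he hw (not_not.1 hwX) hu huX)
  rw [if_neg hC, if_pos hX, if_pos hXc, hxe]
  ring

section Glue

variable {ι κ : Type} [Fintype ι] {p : ι → ℝ} {q : κ → ℝ}
  {M : ι → Finset (Sym2 V)} {N : κ → Finset (Sym2 V)} {f : ι → Sym2 V} {g : κ → Sym2 V}

theorem isPM_union_of_gluedWeight_ne_zero (hM : ∀ a, IsPMContr G X (M a))
    (hN : ∀ b, IsPMContr G Xᶜ (N b)) (hMf : ∀ a, M a ∩ cutE G X = {f a})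
    (hNg : ∀ b, N b ∩ cutE G X = {g b}) {ab : ι × κ} (hab : gluedWeight p q f g ab ≠ 0) :
    IsPM G (M ab.1 ∪ N ab.2) := by
  refine (hM ab.1).isPM_union (hN ab.2) ?_
  rw [hMf, hNg, eq_of_gluedWeight_ne_zero hab]

theorem sum_gluedWeight_smul_indVec_union [Fintype κ] (hp : ∀ a, 0 ≤ p a) (hq : ∀ b, 0 ≤ q b)
    (hpq : ∀ c, ∑ a with f a = c, p a = ∑ b with g b = c, q b)
    (hM : ∀ a, IsPMContr G X (M a)) (hN : ∀ b, IsPMContr G Xᶜ (N b))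
    (hMf : ∀ a, M a ∩ cutE G X = {f a}) (hNg : ∀ b, N b ∩ cutE G X = {g b}) :
    ∑ ab, gluedWeight p q f g ab • indVec (M ab.1 ∪ N ab.2) =
      ∑ a, p a • indVec (M a) + ∑ b, q b • indVec (N b) - ∑ a, p a • indVec {f a} := by
  calc ∑ ab, gluedWeight p q f g ab • indVec (M ab.1 ∪ N ab.2)
      = ∑ ab, gluedWeight p q f g ab •
          (indVec (M ab.1) + indVec (N ab.2) - indVec {f ab.1}) := by
        refine sum_congr rfl fun ab _ => ?_
        by_cases hab : gluedWeight p q f g ab = 0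
        · simp [hab]
        · rw [(hM ab.1).indVec_union (hN ab.2) (hMf ab.1)
            (by rw [hNg, eq_of_gluedWeight_ne_zero hab])]
    _ = ∑ a, p a • indVec (M a) + ∑ b, q b • indVec (N b) - ∑ a, p a • indVec {f a} := by
        simp only [smul_sub, smul_add, sum_add_distrib, sum_sub_distrib]
        rw [sum_gluedWeight_smul_fst hp hpq (fun a => indVec (M a)),
          sum_gluedWeight_smul_snd hq hpq (fun b => indVec (N b)),
          sum_gluedWeight_smul_fst hp hpq (fun a => indVec {f a})]

end Glue

theorem subset_faceCut (hBvN₁ : BvNContr G Xᶜ) (hBvN₂ : BvNContr G X) :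
    (fracSubspace G X : Set (Sym2 V → ℝ)) ∩ Set.Ici 0 ⊆ faceCut G X := by
  intro x hx
  obtain ⟨ι, _, p, M, f, hp0, hp1, hM, hMf, hx₁⟩ :=
    exists_sum_eq_of_mem_contrPolytope (indicator_mem_contrPolytope hBvN₂ hx)
  obtain ⟨κ, _, q, N, g, hq0, -, hN, hNg, hx₂⟩ := exists_sum_eq_of_mem_contrPolytope
    (indicator_mem_contrPolytope hBvN₁ (by rwa [fracSubspace_compl]))
  simp only [cutE_compl] at hNg
  have hpq : ∀ c, ∑ a with f a = c, p a = ∑ b with g b = c, q b := by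
    intro c
    rw [sum_filter_eq_of_inter_eq_singleton hMf, sum_filter_eq_of_inter_eq_singleton hNg,
      hx₁, hx₂]
    split_ifs with hc
    · have hc' : c ∈ cutE G Xᶜ := by rwa [cutE_compl]
      rw [Set.indicator_of_mem (not_forall_mem_of_mem_cutE hc),
        Set.indicator_of_mem (not_forall_mem_of_mem_cutE hc')]
    · rfl
  have hsum : ∑ ab, gluedWeight p q f g ab • indVec (M ab.1 ∪ N ab.2) = x := by
    rw [sum_gluedWeight_smul_indVec_union hp0 hq0 hpq hM hN hMf hNg]
    funext e
    rw [Pi.sub_apply, Pi.add_apply, sum_smul_indVec_singleton_apply,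
      sum_filter_eq_of_inter_eq_singleton hMf, hx₁, hx₂]
    exact indicator_add_indicator_sub_eq hx.1.1 e
  have hw1 : ∑ ab, gluedWeight p q f g ab = 1 := by
    simpa [hp1] using sum_gluedWeight_smul_fst hp0 hpq (fun _ => (1 : ℝ))
  have hmem := (convex_convexHull ℝ {x | ∃ M, IsPM G M ∧ x = indVec M}).finsum_mem
    (gluedWeight_nonneg hp0 hq0) (by rwa [finsum_eq_sum_of_fintype])
    (z := fun ab => indVec (M ab.1 ∪ N ab.2)) fun ab hab =>
      subset_convexHull ℝ _ ⟨_, isPM_union_of_gluedWeight_ne_zero hM hN hMf hNg hab, rfl⟩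
  rw [finsum_eq_sum_of_fintype, hsum] at hmem
  exact ⟨hmem, hx.1.2.2⟩

theorem faceCut_eq (hBvN₁ : BvNContr G Xᶜ) (hBvN₂ : BvNContr G X) :
    faceCut G X = (fracSubspace G X : Set (Sym2 V → ℝ)) ∩ Set.Ici 0 :=
  faceCut_subset.antisymm (subset_faceCut hBvN₁ hBvN₂)

end Polytopes

variable {V : Type} [Fintype V] [DecidableEq V]

theorem stmt10_general (G : SimpleGraph V) (X : Set V)
    (hBvN1 : BvNContr G Xᶜ) (hBvN2 : BvNContr G X) :
    faceCut G X =
      {x | (∀ e, 0 ≤ x e) ∧ (∀ e : Sym2 V, e ∉ G.edgeSet → x e = 0) ∧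
        (∀ v : V, edgeSum x (cutE G {v}) = 1) ∧ edgeSum x (cutE G X) = 1} ∧
    ∀ F, IsFaceOf (faceCut G X) F → polyDim F = polyDim (faceCut G X) - 1 →
      ∃ e ∈ G.edgeSet, F = {x ∈ faceCut G X | x e = 0} := by
  rw [faceCut_eq hBvN1 hBvN2]
  refine ⟨?_, fun F hF hdim => ?_⟩
  · ext x
    simp only [Set.mem_inter_iff, SetLike.mem_coe, mem_fracSubspace, Set.mem_Ici, Pi.le_def,
      Pi.zero_apply, Set.mem_ofPred_eq]
    tauto
  · obtain ⟨e, ⟨w, hw, hwe⟩, rfl⟩ :=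
      exists_eq_setOf_apply_eq_zero_of_polyDim zero_notMem_fracSubspace hF hdim
    exact ⟨e, by_contra fun he => hwe (hw.1.1 e he), rfl⟩

/-- if both cut-contractions of `G` along a separating cut `C = δ(X)`
are Birkhoff–von Neumann, then `P(G;C)` is described by nonnegativity, the degree
equations and `x(C) = 1`; in particular every facet of `P(G;C)` is exposed by a
non-negativity inequality. -/
theorem stmt10 (G : SimpleGraph V) (hG : MatchingCovered G) (X : Set V)
    (hsep : SeparatingCut G X)
    (hBvN1 : BvNContr G Xᶜ) (hBvN2 : BvNContr G X) :
    faceCut G X =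
      {x | (∀ e, 0 ≤ x e) ∧ (∀ e : Sym2 V, e ∉ G.edgeSet → x e = 0) ∧
        (∀ v : V, edgeSum x (cutE G {v}) = 1) ∧ edgeSum x (cutE G X) = 1} ∧
    ∀ F, IsFaceOf (faceCut G X) F → polyDim F = polyDim (faceCut G X) - 1 →
      ∃ e ∈ G.edgeSet, F = {x ∈ faceCut G X | x e = 0} :=
  stmt10_general G X hBvN1 hBvN2

end PaperPM
end
end

section
/- The Petersen graph has exactly six perfect matchings; their incidence vectors are linearly independent and form a basis of the linear hull of the perfect matching polytope of the Petersen graph. Moreover, every edge lies in exactly two perfect matchings, and for any 5-cycle with vertex set Y, exactly one perfect matching N₀ satisfies |N₀ ∩ δ(Y)| = 5 while the other five satisfy |N ∩ δ(Y)| = 1. -/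
open Classical Finset

noncomputable section

namespace PaperPM

variable {V : Type} [Fintype V] [DecidableEq V]

/-! ### Auxiliary setup for the Petersen graph -/

abbrev PV := {s : Finset (Fin 5) // s.card = 2}

instance petersenAdjDec : DecidableRel petersenGraph.Adj :=
  fun a b => inferInstanceAs (Decidable (Disjoint (a : Finset (Fin 5)) (b : Finset (Fin 5))))

def pv01 : PV := ⟨{0,1}, by decide⟩
def pv02 : PV := ⟨{0,2}, by decide⟩
def pv03 : PV := ⟨{0,3}, by decide⟩
def pv04 : PV := ⟨{0,4}, by decide⟩
def pv12 : PV := ⟨{1,2}, by decide⟩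
def pv13 : PV := ⟨{1,3}, by decide⟩
def pv14 : PV := ⟨{1,4}, by decide⟩
def pv23 : PV := ⟨{2,3}, by decide⟩
def pv24 : PV := ⟨{2,4}, by decide⟩
def pv34 : PV := ⟨{3,4}, by decide⟩

def PMa : Finset (Sym2 PV) := {s(pv01, pv23), s(pv02, pv14), s(pv03, pv24), s(pv04, pv13), s(pv12, pv34)}
def PMb : Finset (Sym2 PV) := {s(pv01, pv23), s(pv02, pv34), s(pv03, pv14), s(pv04, pv12), s(pv13, pv24)}
def PMc : Finset (Sym2 PV) := {s(pv01, pv24), s(pv02, pv13), s(pv03, pv14), s(pv04, pv23), s(pv12, pv34)}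
def PMd : Finset (Sym2 PV) := {s(pv01, pv24), s(pv02, pv34), s(pv03, pv12), s(pv04, pv13), s(pv14, pv23)}
def PMe : Finset (Sym2 PV) := {s(pv01, pv34), s(pv02, pv13), s(pv03, pv24), s(pv04, pv12), s(pv14, pv23)}
def PMf : Finset (Sym2 PV) := {s(pv01, pv34), s(pv02, pv14), s(pv03, pv12), s(pv04, pv23), s(pv13, pv24)}
def SIX : Finset (Finset (Sym2 PV)) := {PMa, PMb, PMc, PMd, PMe, PMf}
def sixL : List (Finset (Sym2 PV)) := [PMa, PMb, PMc, PMd, PMe, PMf]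
def EDGES : Finset (Sym2 PV) :=
  {s(pv01, pv23), s(pv01, pv24), s(pv01, pv34), s(pv02, pv13), s(pv02, pv14), s(pv02, pv34),
   s(pv03, pv12), s(pv03, pv14), s(pv03, pv24), s(pv04, pv12), s(pv04, pv13), s(pv04, pv23),
   s(pv12, pv34), s(pv13, pv24), s(pv14, pv23)}

lemma edge_mem : ∀ e : Sym2 PV, e ∈ petersenGraph.edgeSet ↔ e ∈ EDGES := by decide

def pmB (M : Finset (Sym2 PV)) : Bool := decide (∀ v : PV, (M.filter (fun e => v ∈ e)).card = 1)

lemma pmB_iff (M : Finset (Sym2 PV)) : pmB M = true ↔ ∀ v : PV, ∃! e, e ∈ M ∧ v ∈ e := by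
  unfold pmB
  rw [decide_eq_true_iff]
  constructor
  · intro h v
    obtain ⟨a, ha⟩ := Finset.card_eq_one.mp (h v)
    have haM : a ∈ M.filter (fun e => v ∈ e) := ha ▸ Finset.mem_singleton_self a
    rw [Finset.mem_filter] at haM
    refine ⟨a, haM, ?_⟩
    intro y hy
    have hy' : y ∈ M.filter (fun e => v ∈ e) := Finset.mem_filter.mpr hy
    rw [ha] at hy'
    exact Finset.mem_singleton.mp hy'
  · intro h v
    obtain ⟨a, ha, hu⟩ := h v
    rw [Finset.card_eq_one]
    refine ⟨a, ?_⟩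
    ext y
    simp only [Finset.mem_filter, Finset.mem_singleton]
    exact ⟨fun hy => hu y hy, fun hy => hy ▸ ha⟩

lemma isPM_of (M : Finset (Sym2 PV)) (h1 : M ⊆ EDGES) (h2 : pmB M = true) :
    IsPM petersenGraph M :=
  ⟨fun e he => (edge_mem e).mpr (h1 (Finset.mem_coe.mp he)), (pmB_iff M).mp h2⟩

def N12L : List (Sym2 PV) := [s(pv12,pv03), s(pv12,pv04), s(pv12,pv34)]
def N13L : List (Sym2 PV) := [s(pv13,pv02), s(pv13,pv04), s(pv13,pv24)]
def N14L : List (Sym2 PV) := [s(pv14,pv02), s(pv14,pv03), s(pv14,pv23)]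
def N23L : List (Sym2 PV) := [s(pv23,pv01), s(pv23,pv04), s(pv23,pv14)]
def N24L : List (Sym2 PV) := [s(pv24,pv01), s(pv24,pv03), s(pv24,pv13)]
def N34L : List (Sym2 PV) := [s(pv34,pv01), s(pv34,pv02), s(pv34,pv12)]

def enumB : Bool :=
  N12L.all fun e1 => N13L.all fun e2 => N14L.all fun e3 =>
  N23L.all fun e4 => N24L.all fun e5 => N34L.all fun e6 =>
    !(pmB {e1,e2,e3,e4,e5,e6}) || decide (({e1,e2,e3,e4,e5,e6} : Finset (Sym2 PV)) ∈ SIX)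

set_option maxRecDepth 10000 in
lemma enumB_true : enumB = true := by decide

lemma enum_mem : ∀ e1 ∈ N12L, ∀ e2 ∈ N13L, ∀ e3 ∈ N14L, ∀ e4 ∈ N23L, ∀ e5 ∈ N24L, ∀ e6 ∈ N34L,
    pmB {e1,e2,e3,e4,e5,e6} = true → ({e1,e2,e3,e4,e5,e6} : Finset (Sym2 PV)) ∈ SIX := by
  have h := enumB_true
  unfold enumB at h
  simp only [List.all_eq_true, Bool.or_eq_true, Bool.not_eq_true', decide_eq_true_eq] at h
  intro e1 h1 e2 h2 e3 h3 e4 h4 e5 h5 e6 h6 hpm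
  rcases h e1 h1 e2 h2 e3 h3 e4 h4 e5 h5 e6 h6 with h' | h'
  · rw [hpm] at h'; cases h'
  · exact h'

lemma root12 : ∀ e : Sym2 PV, e ∈ EDGES → pv12 ∈ e → e ∈ N12L := by decide
lemma root13 : ∀ e : Sym2 PV, e ∈ EDGES → pv13 ∈ e → e ∈ N13L := by decide
lemma root14 : ∀ e : Sym2 PV, e ∈ EDGES → pv14 ∈ e → e ∈ N14L := by decide
lemma root23 : ∀ e : Sym2 PV, e ∈ EDGES → pv23 ∈ e → e ∈ N23L := by decide
lemma root24 : ∀ e : Sym2 PV, e ∈ EDGES → pv24 ∈ e → e ∈ N24L := by decide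
lemma root34 : ∀ e : Sym2 PV, e ∈ EDGES → pv34 ∈ e → e ∈ N34L := by decide
lemma cover6 : ∀ e : Sym2 PV, e ∈ EDGES →
    pv12 ∈ e ∨ pv13 ∈ e ∨ pv14 ∈ e ∨ pv23 ∈ e ∨ pv24 ∈ e ∨ pv34 ∈ e := by decide

lemma isPM_char (M : Finset (Sym2 PV)) : IsPM petersenGraph M ↔ M ∈ SIX := by
  constructor
  · rintro ⟨hsub', hU⟩
    have hsub : M ⊆ EDGES := fun e he => (edge_mem e).mp (hsub' (Finset.mem_coe.mpr he))
    obtain ⟨e1, ⟨he1M, hv1⟩, hu1⟩ := hU pv12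
    obtain ⟨e2, ⟨he2M, hv2⟩, hu2⟩ := hU pv13
    obtain ⟨e3, ⟨he3M, hv3⟩, hu3⟩ := hU pv14
    obtain ⟨e4, ⟨he4M, hv4⟩, hu4⟩ := hU pv23
    obtain ⟨e5, ⟨he5M, hv5⟩, hu5⟩ := hU pv24
    obtain ⟨e6, ⟨he6M, hv6⟩, hu6⟩ := hU pv34
    have hMF : M = ({e1,e2,e3,e4,e5,e6} : Finset (Sym2 PV)) := by
      apply Finset.Subset.antisymm
      · intro e he
        rcases cover6 e (hsub he) with h | h | h | h | h | h
        · rw [hu1 e ⟨he, h⟩]; simp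
        · rw [hu2 e ⟨he, h⟩]; simp
        · rw [hu3 e ⟨he, h⟩]; simp
        · rw [hu4 e ⟨he, h⟩]; simp
        · rw [hu5 e ⟨he, h⟩]; simp
        · rw [hu6 e ⟨he, h⟩]; simp
      · intro e he
        simp only [Finset.mem_insert, Finset.mem_singleton] at he
        rcases he with rfl | rfl | rfl | rfl | rfl | rfl <;> assumption
    have hpm : pmB ({e1,e2,e3,e4,e5,e6} : Finset (Sym2 PV)) = true := by
      rw [← hMF, pmB_iff]; exact hU
    have := enum_mem e1 (root12 e1 (hsub he1M) hv1) e2 (root13 e2 (hsub he2M) hv2)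
      e3 (root14 e3 (hsub he3M) hv3) e4 (root23 e4 (hsub he4M) hv4)
      e5 (root24 e5 (hsub he5M) hv5) e6 (root34 e6 (hsub he6M) hv6) hpm
    rwa [← hMF] at this
  · intro h
    simp only [SIX, Finset.mem_insert, Finset.mem_singleton] at h
    rcases h with rfl | rfl | rfl | rfl | rfl | rfl
    · exact isPM_of _ (by decide) (by decide)
    · exact isPM_of _ (by decide) (by decide)
    · exact isPM_of _ (by decide) (by decide)
    · exact isPM_of _ (by decide) (by decide)
    · exact isPM_of _ (by decide) (by decide)
    · exact isPM_of _ (by decide) (by decide)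

lemma pm_set_eq : {M | IsPM petersenGraph M} = (↑SIX : Set (Finset (Sym2 PV))) := by
  ext M
  simp only [Set.mem_setOf_eq, Finset.mem_coe]
  exact isPM_char M

/-! ### Linear independence -/

def PML : Fin 6 → Finset (Sym2 PV) := ![PMa, PMb, PMc, PMd, PMe, PMf]

def idx6 (M : Finset (Sym2 PV)) : Fin 6 :=
  if M = PMa then 0 else if M = PMb then 1 else if M = PMc then 2
  else if M = PMd then 3 else if M = PMe then 4 else 5

lemma idx6_spec : ∀ M ∈ SIX, PML (idx6 M) = M := by
  intro M h
  simp only [SIX, Finset.mem_insert, Finset.mem_singleton] at h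
  rcases h with rfl | rfl | rfl | rfl | rfl | rfl
  · decide
  · decide
  · decide
  · decide
  · decide
  · decide

lemma li6 : LinearIndependent ℝ (fun i => indVec (PML i)) := by
  rw [Fintype.linearIndependent_iff]
  intro g hg
  have key : ∀ e : Sym2 PV,
      g 0 * (if e ∈ PMa then (1:ℝ) else 0) + g 1 * (if e ∈ PMb then 1 else 0)
      + g 2 * (if e ∈ PMc then 1 else 0) + g 3 * (if e ∈ PMd then 1 else 0)
      + g 4 * (if e ∈ PMe then 1 else 0) + g 5 * (if e ∈ PMf then 1 else 0) = 0 := by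
    intro e
    have h := congrFun hg e
    simp [Fin.sum_univ_six, PML, indVec, mul_comm, add_assoc] at h ⊢
    convert h
    all_goals exact ite_congr rfl (fun _ => rfl) (fun _ => rfl)
  have h1 := key s(pv01, pv23)
  have h2 := key s(pv03, pv14)
  have h3 := key s(pv12, pv34)
  have h4 := key s(pv14, pv23)
  have h5 := key s(pv01, pv34)
  have h6 := key s(pv03, pv12)
  rw [if_pos (by decide), if_pos (by decide), if_neg (by decide), if_neg (by decide),
    if_neg (by decide), if_neg (by decide)] at h1
  rw [if_neg (by decide), if_pos (by decide), if_pos (by decide), if_neg (by decide),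
    if_neg (by decide), if_neg (by decide)] at h2
  rw [if_pos (by decide), if_neg (by decide), if_pos (by decide), if_neg (by decide),
    if_neg (by decide), if_neg (by decide)] at h3
  rw [if_neg (by decide), if_neg (by decide), if_neg (by decide), if_pos (by decide),
    if_pos (by decide), if_neg (by decide)] at h4
  rw [if_neg (by decide), if_neg (by decide), if_neg (by decide), if_neg (by decide),
    if_pos (by decide), if_pos (by decide)] at h5
  rw [if_neg (by decide), if_neg (by decide), if_neg (by decide), if_pos (by decide),
    if_neg (by decide), if_pos (by decide)] at h6
  intro i
  fin_cases i <;> [skip; skip; skip; skip; skip; skip] <;> simp at h1 h2 h3 h4 h5 h6 ⊢ <;> linarith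

lemma li_final :
    LinearIndependent ℝ (fun M : {M // IsPM petersenGraph M} => indVec M.1) := by
  have heq : (fun M : {M // IsPM petersenGraph M} => indVec M.1)
      = (fun i => indVec (PML i)) ∘ (fun M : {M // IsPM petersenGraph M} => idx6 M.1) := by
    funext M
    simp only [Function.comp_apply]
    rw [idx6_spec M.1 ((isPM_char M.1).mp M.2)]
  rw [heq]
  refine li6.comp _ ?_
  intro i j hij
  have hi := idx6_spec i.1 ((isPM_char i.1).mp i.2)
  have hj := idx6_spec j.1 ((isPM_char j.1).mp j.2)
  apply Subtype.ext
  have hij' : idx6 i.1 = idx6 j.1 := hij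
  rw [← hi, ← hj, hij']

/-! ### Span of the polytope -/

lemma span_part :
    Submodule.span ℝ (indVec '' {M | IsPM petersenGraph M})
      = Submodule.span ℝ (pmPolytope petersenGraph) := by
  have hset : {x : Sym2 PV → ℝ | ∃ M, IsPM petersenGraph M ∧ x = indVec M}
      = indVec '' {M | IsPM petersenGraph M} := by
    ext x
    simp only [Set.mem_setOf_eq, Set.mem_image]
    constructor
    · rintro ⟨M, hM, rfl⟩; exact ⟨M, hM, rfl⟩
    · rintro ⟨M, hM, rfl⟩; exact ⟨M, hM, rfl⟩
  unfold pmPolytope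
  rw [hset]
  refine le_antisymm (Submodule.span_mono (subset_convexHull ℝ _)) ?_
  rw [Submodule.span_le]
  exact convexHull_min Submodule.subset_span (Submodule.span ℝ _).convex

/-! ### Every edge is in exactly two perfect matchings -/

lemma edge_two : ∀ e ∈ petersenGraph.edgeSet,
    {M | IsPM petersenGraph M ∧ e ∈ M}.ncard = 2 := by
  have hcard : ∀ e ∈ EDGES, (SIX.filter (fun M => e ∈ M)).card = 2 := by decide
  intro e he
  have heE : e ∈ EDGES := (edge_mem e).mp he
  have hseteq : {M | IsPM petersenGraph M ∧ e ∈ M}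
      = (↑(SIX.filter (fun M => e ∈ M)) : Set (Finset (Sym2 PV))) := by
    ext M
    simp only [Set.mem_setOf_eq, Finset.coe_filter, isPM_char]
  rw [hseteq, Set.ncard_coe_finset]
  exact hcard e heE

/-! ### 5-cycles -/

def cutB (Y : Finset PV) : Finset (Sym2 PV) :=
  EDGES.filter (fun e => (Y.filter (fun v => v ∈ e)).card = 1)

def guardB (Y : Finset PV) : Bool :=
  decide (Y.card = 5) && decide (∀ v ∈ Y, (Y.filter (fun u => petersenGraph.Adj v u)).card = 2)

def concB (Y : Finset PV) : Bool :=
  sixL.any fun N => decide ((N ∩ cutB Y).card = 5) &&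
    (sixL.all fun N' => decide (N' = N) || decide ((N' ∩ cutB Y).card = 1))

instance cycInst : Decidable (∀ Y ∈ (univ : Finset PV).powerset, guardB Y = true → concB Y = true) :=
  Finset.decidableDforallFinset
    (_hp := fun Y _ => (inferInstance : Decidable (guardB Y = true → concB Y = true)))

lemma cycB_true : ∀ Y ∈ (univ : Finset PV).powerset, guardB Y = true → concB Y = true := by decide +kernel

lemma cutE_eq (F : Finset PV) : cutE petersenGraph (↑F : Set PV) = cutB F := by
  ext e
  simp only [cutE, cutB, Finset.mem_filter, Finset.mem_univ, true_and]
  induction e with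
  | _ a b =>
    constructor
    · rintro ⟨hE, u, v, huv, hu, hv⟩
      have hne : a ≠ b := (petersenGraph.mem_edgeSet.mp hE).ne
      refine ⟨(edge_mem _).mp hE, ?_⟩
      have hfil : F.filter (fun w => w ∈ s(a, b)) = F ∩ {a, b} := by
        ext w
        simp only [Finset.mem_filter, Finset.mem_inter, Finset.mem_insert, Finset.mem_singleton,
          Sym2.mem_iff]
      rw [hfil]
      rcases Sym2.eq_iff.mp huv with ⟨rfl, rfl⟩ | ⟨rfl, rfl⟩
      · have : F ∩ {a, b} = {a} := by
          ext w
          simp only [Finset.mem_inter, Finset.mem_insert, Finset.mem_singleton]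
          constructor
          · rintro ⟨hw, rfl | rfl⟩
            · rfl
            · exact absurd hw (by simpa using hv)
          · rintro rfl; exact ⟨by simpa using hu, Or.inl rfl⟩
        rw [this, Finset.card_singleton]
      · have : F ∩ {a, b} = {b} := by
          ext w
          simp only [Finset.mem_inter, Finset.mem_insert, Finset.mem_singleton]
          constructor
          · rintro ⟨hw, rfl | rfl⟩
            · exact absurd hw (by simpa using hv)
            · rfl
          · rintro rfl; exact ⟨by simpa using hu, Or.inr rfl⟩
        rw [this, Finset.card_singleton]
    · rintro ⟨hE, hcard⟩
      have hES : s(a, b) ∈ petersenGraph.edgeSet := (edge_mem _).mpr hE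
      have hne : a ≠ b := (petersenGraph.mem_edgeSet.mp hES).ne
      refine ⟨hES, ?_⟩
      have hfil : F.filter (fun w => w ∈ s(a, b)) = F ∩ {a, b} := by
        ext w
        simp only [Finset.mem_filter, Finset.mem_inter, Finset.mem_insert, Finset.mem_singleton,
          Sym2.mem_iff]
      rw [hfil] at hcard
      by_cases ha : a ∈ F <;> by_cases hb : b ∈ F
      · exfalso
        have : F ∩ {a, b} = {a, b} := by
          ext w
          simp only [Finset.mem_inter, Finset.mem_insert, Finset.mem_singleton]
          constructor
          · exact fun h => h.2
          · rintro (rfl | rfl) <;> simp [ha, hb]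
        rw [this, Finset.card_insert_of_notMem (by simpa using hne), Finset.card_singleton] at hcard
        omega
      · exact ⟨a, b, rfl, by simpa using ha, by simpa using hb⟩
      · exact ⟨b, a, Sym2.eq_swap, by simpa using hb, by simpa using ha⟩
      · exfalso
        have : F ∩ {a, b} = ∅ := by
          ext w
          simp only [Finset.mem_inter, Finset.mem_insert, Finset.mem_singleton,
            Finset.notMem_empty, iff_false, not_and]
          rintro hw (rfl | rfl)
          · exact ha hw
          · exact hb hw
        rw [this] at hcard
        simp at hcard

lemma sixL_mem (N : Finset (Sym2 PV)) : N ∈ sixL ↔ N ∈ SIX := by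
  simp [sixL, SIX]

lemma cycle_degree : ∀ x : Fin 5, (SimpleGraph.cycleGraph 5).degree x = 2 := by decide

lemma cycle_part : ∀ Y : Set PV,
    Nonempty (petersenGraph.induce Y ≃g SimpleGraph.cycleGraph 5) →
    ∃ N₀, IsPM petersenGraph N₀ ∧ (N₀ ∩ cutE petersenGraph Y).card = 5 ∧
      ∀ N, IsPM petersenGraph N → N ≠ N₀ → (N ∩ cutE petersenGraph Y).card = 1 := by
  intro Y hne
  obtain ⟨φ⟩ := hne
  have hYcoe : (↑Y.toFinset : Set PV) = Y := Set.coe_toFinset Y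
  -- card of Y
  have hcard : Y.toFinset.card = 5 := by
    rw [Set.toFinset_card]
    rw [Fintype.card_congr φ.toEquiv, Fintype.card_fin]
  -- degrees
  have hdeg : ∀ v ∈ Y.toFinset, (Y.toFinset.filter (fun u => petersenGraph.Adj v u)).card = 2 := by
    intro v hv
    have hvY : v ∈ Y := Set.mem_toFinset.mp hv
    have e1 := φ.mapNeighborSet ⟨v, hvY⟩
    have hc2 : Fintype.card ((SimpleGraph.cycleGraph 5).neighborSet (φ ⟨v, hvY⟩)) = 2 := by
      rw [SimpleGraph.card_neighborSet_eq_degree]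
      exact cycle_degree _
    have hc1 : Fintype.card ((petersenGraph.induce Y).neighborSet ⟨v, hvY⟩) = 2 := by
      rw [Fintype.card_congr e1]
      exact hc2
    have e2 : ((petersenGraph.induce Y).neighborSet ⟨v, hvY⟩) ≃
        {u // u ∈ Y.toFinset.filter (fun u => petersenGraph.Adj v u)} := by
      refine ⟨fun w => ⟨w.1.1, ?_⟩, fun u => ⟨⟨u.1, ?_⟩, ?_⟩, ?_, ?_⟩
      · rcases w with ⟨⟨w, hwY⟩, hadj⟩
        simp only [Finset.mem_filter, Set.mem_toFinset]
        exact ⟨hwY, by simpa [SimpleGraph.comap_adj] using hadj⟩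
      · exact Set.mem_toFinset.mp (Finset.mem_filter.mp u.2).1
      · have := (Finset.mem_filter.mp u.2).2
        simpa [SimpleGraph.neighborSet, SimpleGraph.comap_adj] using this
      · rintro ⟨⟨w, hwY⟩, hadj⟩; rfl
      · rintro ⟨u, hu⟩; rfl
    have : Fintype.card {u // u ∈ Y.toFinset.filter (fun u => petersenGraph.Adj v u)} = 2 := by
      rw [← Fintype.card_congr e2]
      exact hc1
    rwa [Fintype.card_coe] at this
  have hguard : guardB Y.toFinset = true := by
    unfold guardB
    rw [Bool.and_eq_true, decide_eq_true_iff, decide_eq_true_iff]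
    exact ⟨hcard, hdeg⟩
  have hconc := cycB_true Y.toFinset (Finset.mem_powerset.mpr (Finset.subset_univ _)) hguard
  unfold concB at hconc
  simp only [List.any_eq_true, List.all_eq_true, Bool.and_eq_true, Bool.or_eq_true,
    decide_eq_true_eq] at hconc
  obtain ⟨N₀, hN₀L, hN₀5, hall⟩ := hconc
  refine ⟨N₀, (isPM_char N₀).mpr ((sixL_mem N₀).mp hN₀L), ?_, ?_⟩
  · rw [← hYcoe, cutE_eq]
    exact hN₀5
  · intro N hN hNne
    have hNL : N ∈ sixL := (sixL_mem N).mpr ((isPM_char N).mp hN)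
    rcases hall N hNL with h | h
    · exact absurd h hNne
    · rw [← hYcoe, cutE_eq]
      exact h

/-- the Petersen graph has exactly six perfect matchings; their
incidence vectors are linearly independent and span the linear hull of its perfect
matching polytope; every edge lies in exactly two perfect matchings; and for every
5-cycle with vertex set `Y`, exactly one perfect matching meets `δ(Y)` five times
while all others meet it once. -/
theorem stmt14 :
    {M | IsPM petersenGraph M}.ncard = 6 ∧
    LinearIndependent ℝ (fun M : {M // IsPM petersenGraph M} => indVec M.1) ∧
    Submodule.span ℝ (indVec '' {M | IsPM petersenGraph M}) =
      Submodule.span ℝ (pmPolytope petersenGraph) ∧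
    (∀ e ∈ petersenGraph.edgeSet, {M | IsPM petersenGraph M ∧ e ∈ M}.ncard = 2) ∧
    ∀ Y : Set {s : Finset (Fin 5) // s.card = 2},
      Nonempty (petersenGraph.induce Y ≃g SimpleGraph.cycleGraph 5) →
      ∃ N₀, IsPM petersenGraph N₀ ∧ (N₀ ∩ cutE petersenGraph Y).card = 5 ∧
        ∀ N, IsPM petersenGraph N → N ≠ N₀ → (N ∩ cutE petersenGraph Y).card = 1 := by
  refine ⟨?_, li_final, span_part, edge_two, cycle_part⟩
  rw [pm_set_eq, Set.ncard_coe_finset]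
  decide


end PaperPM
end
end
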